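/- arXiv:0802.3860 — 4 statements merged into one kernel-verified Lean document; each statement's English description precedes it below -/
import Mathlib

section
/- Let m ≤ n, k ≥ 1 and d ≥ 1. Let g : {0,1}^m → {−1,1} and let μ be a distribution on {0,1}^m such that for every T ⊆ {1,…,m} with |T| ≤ d and every function h : {0,1}^{|T|} → ℝ, ∑_{z∈{0,1}^m} μ(z)·g(z)·h(z|T) = 0. Let S = (S_u : u ∈ {0,1}^k) be a multiset of m-element subsets of {1,…,n}, and suppose its number of conflicts satisfies q(S) < d·2^k/2. Then E_x[ ∏_{u∈{0,1}^k} μ(x|S_u)·g(x|S_u) ] = 0, where x is uniform over {0,1}^n. -/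
/-- The substring of `x : {0,1}^n` indexed by the elements of the `m`-element set `S`,
in increasing order. -/
noncomputable def restrict {n m : ℕ} (x : Fin n → Bool) (S : Finset (Fin n))
    (h : S.card = m) : Fin m → Bool :=
  fun i => x ((S.orderIsoOfFin h i).1)

lemma small_q_counting (m n k d : ℕ)
    (S : (Fin k → Bool) → Finset (Fin n)) (hS : ∀ u, (S u).card = m)
    (hq : ((m * 2 ^ k - (Finset.univ.biUnion S).card : ℕ) : ℝ) < d * 2 ^ k / 2) :
    ∃ u0, (S u0 ∩ ((Finset.univ.erase u0).biUnion S)).card ≤ d := by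
  classical
  set U : Finset (Fin n) := Finset.univ.biUnion S with hU
  set Tset : (Fin k → Bool) → Finset (Fin n) :=
    fun u => S u ∩ ((Finset.univ.erase u).biUnion S) with hTset
  set mult : Fin n → ℕ := fun i => (Finset.univ.filter fun u => i ∈ S u).card with hmult
  have hcard_univ : (Finset.univ : Finset (Fin k → Bool)).card = 2 ^ k := by
    simp [Finset.card_univ]
  have hmem : ∀ u, ∀ i ∈ S u, i ∈ U := by
    intro u i hi
    exact Finset.mem_biUnion.2 ⟨u, Finset.mem_univ u, hi⟩
  have hmult1 : ∀ i ∈ U, 1 ≤ mult i := by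
    intro i hi
    rw [hU, Finset.mem_biUnion] at hi
    obtain ⟨u, _, hu⟩ := hi
    exact Finset.card_pos.2 ⟨u, Finset.mem_filter.2 ⟨Finset.mem_univ _, hu⟩⟩
  have hsum_mult : ∑ i ∈ U, mult i = m * 2 ^ k := by
    calc ∑ i ∈ U, mult i
        = ∑ i ∈ U, ∑ u : Fin k → Bool, (if i ∈ S u then 1 else 0) := by
          refine Finset.sum_congr rfl fun i _ => ?_
          simp only [hmult]; rw [Finset.card_filter]
      _ = ∑ u : Fin k → Bool, ∑ i ∈ U, (if i ∈ S u then 1 else 0) := Finset.sum_comm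
      _ = ∑ u : Fin k → Bool, (S u).card := by
          refine Finset.sum_congr rfl fun u _ => ?_
          rw [← Finset.card_filter]
          congr 1
          ext i
          simp only [Finset.mem_filter]
          exact ⟨fun h => h.2, fun h => ⟨hmem u i h, h⟩⟩
      _ = m * 2 ^ k := by
          simp only [hS, Finset.sum_const, hcard_univ, smul_eq_mul]
          ring
  have hUle : U.card ≤ m * 2 ^ k := by
    calc U.card = ∑ _i ∈ U, 1 := by simp
      _ ≤ ∑ i ∈ U, mult i := Finset.sum_le_sum hmult1
      _ = m * 2 ^ k := hsum_mult
  have hq' : ∑ i ∈ U, (mult i - 1) = m * 2 ^ k - U.card := by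
    have h1 : ∑ i ∈ U, (mult i - 1) + U.card = m * 2 ^ k := by
      rw [← hsum_mult]
      calc ∑ i ∈ U, (mult i - 1) + U.card = ∑ i ∈ U, (mult i - 1) + ∑ _i ∈ U, 1 := by simp
        _ = ∑ i ∈ U, ((mult i - 1) + 1) := (Finset.sum_add_distrib).symm
        _ = ∑ i ∈ U, mult i := by
            refine Finset.sum_congr rfl fun i hi => ?_
            have := hmult1 i hi; omega
    omega
  have hTsub : ∀ u, Tset u ⊆ U := by
    intro u
    exact (Finset.inter_subset_left).trans (fun i hi => hmem u i hi)
  have hsum_T : ∑ u : Fin k → Bool, (Tset u).card ≤ 2 * (m * 2 ^ k - U.card) := by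
    have hpt : ∀ i ∈ U, (Finset.univ.filter fun u => i ∈ Tset u).card ≤ 2 * (mult i - 1) := by
      intro i hi
      by_cases h2 : 2 ≤ mult i
      · have hle : (Finset.univ.filter fun u => i ∈ Tset u).card ≤ mult i := by
          apply Finset.card_le_card
          apply Finset.monotone_filter_right
          intro u _ hu
          exact (Finset.mem_inter.1 hu).1
        omega
      · have hempty : (Finset.univ.filter fun u => i ∈ Tset u) = ∅ := by
          rw [Finset.filter_eq_empty_iff]
          intro u _
          intro hu
          rw [hTset] at hu
          simp only [Finset.mem_inter, Finset.mem_biUnion] at hu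
          obtain ⟨hiu, v, hv, hiv⟩ := hu
          have hvu : v ≠ u := Finset.ne_of_mem_erase hv
          have h2' : 2 ≤ mult i := by
            have hsub : ({v, u} : Finset (Fin k → Bool)) ⊆
                Finset.univ.filter fun u => i ∈ S u := by
              intro w hw
              rcases Finset.mem_insert.1 hw with h | h
              · subst h; exact Finset.mem_filter.2 ⟨Finset.mem_univ _, hiv⟩
              · rw [Finset.mem_singleton.1 h]
                exact Finset.mem_filter.2 ⟨Finset.mem_univ _, hiu⟩
            have := Finset.card_le_card hsub
            rwa [Finset.card_pair hvu] at this
          omega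
        rw [hempty]; simp
    calc ∑ u : Fin k → Bool, (Tset u).card
        = ∑ u : Fin k → Bool, ∑ i ∈ U, (if i ∈ Tset u then 1 else 0) := by
          refine Finset.sum_congr rfl fun u _ => ?_
          rw [← Finset.card_filter]
          congr 1
          ext i
          simp only [Finset.mem_filter]
          exact ⟨fun h => ⟨hTsub u h, h⟩, fun h => h.2⟩
      _ = ∑ i ∈ U, ∑ u : Fin k → Bool, (if i ∈ Tset u then 1 else 0) := Finset.sum_comm
      _ = ∑ i ∈ U, (Finset.univ.filter fun u => i ∈ Tset u).card := by
          refine Finset.sum_congr rfl fun i _ => ?_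
          rw [Finset.card_filter]
      _ ≤ ∑ i ∈ U, 2 * (mult i - 1) := Finset.sum_le_sum hpt
      _ = 2 * ∑ i ∈ U, (mult i - 1) := (Finset.mul_sum _ _ _).symm
      _ = 2 * (m * 2 ^ k - U.card) := by rw [hq']
  have hq2 : 2 * (m * 2 ^ k - U.card) < d * 2 ^ k := by
    have h2 : ((2 * (m * 2 ^ k - U.card) : ℕ) : ℝ) < ((d * 2 ^ k : ℕ) : ℝ) := by
      push_cast [Nat.cast_sub hUle]
      push_cast [Nat.cast_sub hUle] at hq
      linarith
    exact_mod_cast h2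
  by_contra hcon
  push_neg at hcon
  have hge : d * 2 ^ k ≤ ∑ u : Fin k → Bool, (Tset u).card := by
    calc d * 2 ^ k = ∑ _u : Fin k → Bool, d := by
          simp [Finset.sum_const, hcard_univ, mul_comm]
      _ ≤ ∑ u : Fin k → Bool, (Tset u).card :=
          Finset.sum_le_sum fun u _ => le_of_lt (hcon u)
  omega

/-- Lemma `small-q-lem`: if `μ·g` is orthogonal to every function depending on
at most `d` coordinates, and the multiset `S = (S_u : u ∈ {0,1}^k)` of `m`-element subsets of
`[1,n]` has number of conflicts `q(S) = m·2^k - |⋃S| < d·2^k/2`, then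
`E_x[∏_u μ(x|S_u)·g(x|S_u)] = 0`. -/
theorem small_q_lemma (m n k d : ℕ) (hmn : m ≤ n) (hk : 1 ≤ k) (hd : 1 ≤ d)
    (g μ : (Fin m → Bool) → ℝ)
    (hg : ∀ z, g z = 1 ∨ g z = -1)
    (hμ0 : ∀ z, 0 ≤ μ z) (hμ1 : (∑ z : Fin m → Bool, μ z) = 1)
    (horth : ∀ T : Finset (Fin m), T.card ≤ d →
      ∀ h : (Fin T.card → Bool) → ℝ,
        (∑ z : Fin m → Bool, μ z * g z * h (fun i => z ((T.orderIsoOfFin rfl i).1))) = 0)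
    (S : (Fin k → Bool) → Finset (Fin n)) (hS : ∀ u, (S u).card = m)
    (hq : ((m * 2 ^ k - (Finset.univ.biUnion S).card : ℕ) : ℝ) < d * 2 ^ k / 2) :
    (∑ x : Fin n → Bool, ∏ u : Fin k → Bool,
        μ (restrict x (S u) (hS u)) * g (restrict x (S u) (hS u))) / 2 ^ n = 0 := by
  classical
  obtain ⟨u0, hu0⟩ := small_q_counting m n k d S hS hq
  set iso := (S u0).orderIsoOfFin (hS u0) with hiso
  set T' : Finset (Fin m) :=
    Finset.univ.filter
      (fun l => (iso l : Fin n) ∈ S u0 ∩ ((Finset.univ.erase u0).biUnion S)) with hT'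
  have hT'card : T'.card ≤ d := by
    have hinj : T'.card ≤ (S u0 ∩ ((Finset.univ.erase u0).biUnion S)).card := by
      apply Finset.card_le_card_of_injOn (fun l => (iso l : Fin n))
      · intro l hl; rw [hT'] at hl; exact (Finset.mem_filter.1 hl).2
      · intro a _ b _ hab
        exact iso.injective (Subtype.ext hab)
    exact le_trans hinj hu0
  set e := Equiv.piEquivPiSubtypeProd (fun i : Fin n => i ∈ S u0) (fun _ => Bool) with he
  set X : (Fin m → Bool) → ({i : Fin n // ¬ i ∈ S u0} → Bool) → (Fin n → Bool) :=
    fun z b => e.symm (fun i => z (iso.symm i), b) with hX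
  have hx_in : ∀ z b i (hi : i ∈ S u0), X z b i = z (iso.symm ⟨i, hi⟩) := by
    intro z b i hi
    simp [hX, he, Equiv.piEquivPiSubtypeProd_symm_apply, dif_pos hi]
  have hx_out : ∀ z b i (hi : ¬ i ∈ S u0), X z b i = b ⟨i, hi⟩ := by
    intro z b i hi
    simp [hX, he, Equiv.piEquivPiSubtypeProd_symm_apply, dif_neg hi]
  have hr0 : ∀ z b, restrict (X z b) (S u0) (hS u0) = z := by
    intro z b; funext l
    have h1 : (iso l : Fin n) ∈ S u0 := (iso l).2
    show X z b (iso l : Fin n) = z l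
    rw [hx_in z b _ h1]
    congr 1
    rw [Subtype.coe_eta]
    exact iso.symm_apply_apply l
  have key : ∀ b : {i : Fin n // ¬ i ∈ S u0} → Bool,
      (∑ z : Fin m → Bool, ∏ u : Fin k → Bool,
        μ (restrict (X z b) (S u) (hS u)) * g (restrict (X z b) (S u) (hS u))) = 0 := by
    intro b
    set xhat : (Fin T'.card → Bool) → Fin n → Bool := fun w i =>
      if hi : i ∈ S u0 then
        (if hl : iso.symm ⟨i, hi⟩ ∈ T' then
          w ((T'.orderIsoOfFin rfl).symm ⟨iso.symm ⟨i, hi⟩, hl⟩) else false)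
      else b ⟨i, hi⟩ with hxhat
    set h : (Fin T'.card → Bool) → ℝ := fun w =>
      ∏ v ∈ Finset.univ.erase u0,
        (μ (restrict (xhat w) (S v) (hS v)) * g (restrict (xhat w) (S v) (hS v))) with hh
    have hagree : ∀ z, ∀ v ∈ Finset.univ.erase u0,
        restrict (xhat (fun j => z ((T'.orderIsoOfFin rfl j : Fin m)))) (S v) (hS v)
          = restrict (X z b) (S v) (hS v) := by
      intro z v hv
      funext j
      simp only [restrict]
      set i : Fin n := ((S v).orderIsoOfFin (hS v) j : Fin n) with hidef
      have hiv : i ∈ S v := ((S v).orderIsoOfFin (hS v) j).2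
      by_cases hi0 : i ∈ S u0
      · have hvne : v ≠ u0 := Finset.ne_of_mem_erase hv
        have hiT0 : i ∈ S u0 ∩ ((Finset.univ.erase u0).biUnion S) :=
          Finset.mem_inter.2 ⟨hi0, Finset.mem_biUnion.2
            ⟨v, Finset.mem_erase.2 ⟨hvne, Finset.mem_univ v⟩, hiv⟩⟩
        have hlT : iso.symm ⟨i, hi0⟩ ∈ T' := by
          rw [hT']
          simp only [Finset.mem_filter, Finset.mem_univ, true_and]
          rw [OrderIso.apply_symm_apply]
          exact hiT0
        rw [hx_in z b i hi0]
        simp only [hxhat, dif_pos hi0, dif_pos hlT]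
        rw [OrderIso.apply_symm_apply]
      · rw [hx_out z b i hi0]
        simp only [hxhat, dif_neg hi0]
    calc (∑ z : Fin m → Bool, ∏ u : Fin k → Bool,
            μ (restrict (X z b) (S u) (hS u)) * g (restrict (X z b) (S u) (hS u)))
        = ∑ z : Fin m → Bool, μ z * g z *
            h (fun j => z ((T'.orderIsoOfFin rfl j : Fin m))) := by
          refine Finset.sum_congr rfl fun z _ => ?_
          rw [← Finset.mul_prod_erase _ _ (Finset.mem_univ u0), hr0 z b]
          congr 1
          rw [hh]
          exact (Finset.prod_congr rfl fun v hv => by rw [hagree z v hv]).symm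
      _ = 0 := horth T' hT'card h
  have hsum0 : (∑ x : Fin n → Bool, ∏ u : Fin k → Bool,
      μ (restrict x (S u) (hS u)) * g (restrict x (S u) (hS u))) = 0 := by
    rw [← Equiv.sum_comp e.symm (fun x => ∏ u : Fin k → Bool,
      μ (restrict x (S u) (hS u)) * g (restrict x (S u) (hS u)))]
    rw [Fintype.sum_prod_type]
    rw [Finset.sum_comm]
    apply Finset.sum_eq_zero
    intro b _
    set e3 : (Fin m → Bool) ≃ ({i : Fin n // i ∈ S u0} → Bool) :=
      Equiv.arrowCongr iso.toEquiv (Equiv.refl Bool) with he3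
    have hconv := Fintype.sum_equiv e3.symm
      (fun a => ∏ u : Fin k → Bool,
        μ (restrict (e.symm (a, b)) (S u) (hS u)) * g (restrict (e.symm (a, b)) (S u) (hS u)))
      (fun z => ∏ u : Fin k → Bool,
        μ (restrict (X z b) (S u) (hS u)) * g (restrict (X z b) (S u) (hS u)))
      (fun a => by
        have h1 : (fun i => (e3.symm a) (iso.symm i)) = a := by
          funext i
          simp [he3, Equiv.arrowCongr, OrderIso.apply_symm_apply]
        have hax : e.symm (a, b) = X (e3.symm a) b := by
          rw [hX]
          dsimp only
          rw [h1]
        rw [hax])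
    rw [hconv]
    exact key b
  rw [hsum0, zero_div]
end

section
/- Let m ≤ n and k ≥ 1. Let μ be a distribution on {0,1}^m and let S = (S_u : u ∈ {0,1}^k) be a multiset of m-element subsets of {1,…,n}. Then E_x[ ∏_{u∈{0,1}^k} μ(x|S_u) ] ≤ 2^{q(S)} / 2^{m·2^k}, where x is uniform over {0,1}^n and q(S) is the number of conflicts of S. -/
lemma restrict_congr {n m : ℕ} {x y : Fin n → Bool} {T : Finset (Fin n)} (h : T.card = m)
    (hxy : ∀ i ∈ T, x i = y i) : restrict x T h = restrict y T h := by
  funext i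
  exact hxy _ (T.orderIsoOfFin h i).2

lemma key_lemma {n m : ℕ} (μ : (Fin m → Bool) → ℝ)
    (hμ0 : ∀ z, 0 ≤ μ z) (hμ1 : (∑ z : Fin m → Bool, μ z) = 1)
    {ι : Type} [Fintype ι] [DecidableEq ι]
    (S : ι → Finset (Fin n)) (hS : ∀ u, (S u).card = m) (U : Finset ι) :
    ∑ x : Fin n → Bool, ∏ u ∈ U, μ (restrict x (S u) (hS u))
      ≤ (2 : ℝ) ^ (n - (U.biUnion S).card) := by
  classical
  induction U using Finset.induction_on with
  | empty =>
      simp only [Finset.prod_empty, Finset.sum_const, Finset.biUnion_empty,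
        Finset.card_empty, Nat.sub_zero, nsmul_eq_mul, mul_one, Finset.card_univ]
      rw [Fintype.card_fun]
      push_cast
      simp
  | @insert w U hw IH =>
      set A := U.biUnion S with hA
      set F := S w \ A with hF
      set f := F.card with hf
      -- cardinal bookkeeping
      have hAn : A.card ≤ n := by
        simpa using (Finset.card_le_univ A)
      have hcard : ((insert w U).biUnion S).card = A.card + f := by
        rw [Finset.biUnion_insert]
        have : S w ∪ A = A ∪ F := by
          rw [hF, Finset.union_sdiff_self_eq_union, Finset.union_comm]
        rw [this, Finset.card_union_of_disjoint Finset.disjoint_sdiff]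
      have hAfn : A.card + f ≤ n := by
        rw [← hcard]; simpa using (Finset.card_le_univ ((insert w U).biUnion S))
      -- the splitting equivalence
      set p : Fin n → Prop := fun i => i ∈ F with hp
      set e := (Equiv.piEquivPiSubtypeProd p (fun _ => Bool)).symm with he
      set cmb : (∀ i : {i // p i}, Bool) → (∀ i : {i // ¬ p i}, Bool) → (Fin n → Bool) :=
        fun a b => e (a, b) with hcmb
      have hcmb_apply : ∀ a b i, cmb a b i = if h : p i then a ⟨i, h⟩ else b ⟨i, h⟩ := by
        intro a b i
        simp [hcmb, he, Equiv.piEquivPiSubtypeProd]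
      -- rewrite sum over x as double sum
      have hsplit : ∀ g : (Fin n → Bool) → ℝ,
          ∑ x : Fin n → Bool, g x = ∑ b, ∑ a, g (cmb a b) := by
        intro g
        rw [← Equiv.sum_comp e g, Fintype.sum_prod_type]
        exact Finset.sum_comm
      -- product over U only depends on b
      have hprod : ∀ a a' b, ∀ u ∈ U,
          restrict (cmb a b) (S u) (hS u) = restrict (cmb a' b) (S u) (hS u) := by
        intro a a' b u hu
        apply restrict_congr
        intro i hi
        have hiA : i ∈ A := Finset.mem_biUnion.2 ⟨u, hu, hi⟩
        have hiF : ¬ p i := by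
          simp only [hp, hF, Finset.mem_sdiff]
          tauto
        rw [hcmb_apply, hcmb_apply, dif_neg hiF, dif_neg hiF]
      set a₀ : (∀ i : {i // p i}, Bool) := fun _ => false with ha₀
      set P : (∀ i : {i // ¬ p i}, Bool) → ℝ :=
        fun b => ∏ u ∈ U, μ (restrict (cmb a₀ b) (S u) (hS u)) with hP
      have hP0 : ∀ b, 0 ≤ P b := fun b => Finset.prod_nonneg fun u _ => hμ0 _
      -- inner sum over a is ≤ 1
      have hinner : ∀ b, ∑ a, μ (restrict (cmb a b) (S w) (hS w)) ≤ 1 := by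
        intro b
        set φ : (∀ i : {i // p i}, Bool) → (Fin m → Bool) :=
          fun a => restrict (cmb a b) (S w) (hS w) with hφ
        have hφinj : Function.Injective φ := by
          intro a a' haa
          funext i
          have hiF : p i.1 := i.2
          have hiS : i.1 ∈ S w := by
            have := i.2; simp only [hp, hF, Finset.mem_sdiff] at this; exact this.1
          obtain ⟨j, hj⟩ := ((S w).orderIsoOfFin (hS w)).surjective ⟨i.1, hiS⟩
          have h1 : φ a j = a i := by
            simp only [hφ, restrict, hj, hcmb_apply, dif_pos hiF]
          have h2 : φ a' j = a' i := by
            simp only [hφ, restrict, hj, hcmb_apply, dif_pos hiF]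
          rw [← h1, ← h2, haa]
        calc ∑ a, μ (φ a) = ∑ z ∈ Finset.univ.image φ, μ z := by
              rw [Finset.sum_image (fun a _ a' _ h => hφinj h)]
          _ ≤ ∑ z : Fin m → Bool, μ z :=
              Finset.sum_le_sum_of_subset_of_nonneg (Finset.subset_univ _)
                (fun z _ _ => hμ0 z)
          _ = 1 := hμ1
      -- main computation
      have hsum : ∑ x : Fin n → Bool, ∏ u ∈ insert w U, μ (restrict x (S u) (hS u))
          ≤ ∑ b, P b := by
        rw [hsplit]
        have : ∀ b, ∑ a, ∏ u ∈ insert w U, μ (restrict (cmb a b) (S u) (hS u))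
            ≤ P b := by
          intro b
          have heq : ∀ a, ∏ u ∈ insert w U, μ (restrict (cmb a b) (S u) (hS u))
              = μ (restrict (cmb a b) (S w) (hS w)) * P b := by
            intro a
            rw [Finset.prod_insert hw]
            congr 1
            exact Finset.prod_congr rfl fun u hu => by rw [hprod a a₀ b u hu]
          calc ∑ a, ∏ u ∈ insert w U, μ (restrict (cmb a b) (S u) (hS u))
              = (∑ a, μ (restrict (cmb a b) (S w) (hS w))) * P b := by
                rw [Finset.sum_mul]; exact Finset.sum_congr rfl fun a _ => heq a
            _ ≤ 1 * P b := mul_le_mul_of_nonneg_right (hinner b) (hP0 b)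
            _ = P b := one_mul _
        exact Finset.sum_le_sum fun b _ => this b
      -- relate ∑ b, P b to IH
      have hIH2 : (2 : ℝ) ^ f * ∑ b, P b ≤ (2 : ℝ) ^ (n - A.card) := by
        have : ∑ x : Fin n → Bool, ∏ u ∈ U, μ (restrict x (S u) (hS u))
            = (2 : ℝ) ^ f * ∑ b, P b := by
          rw [hsplit]
          rw [Finset.mul_sum]
          refine Finset.sum_congr rfl fun b _ => ?_
          have : ∀ a, ∏ u ∈ U, μ (restrict (cmb a b) (S u) (hS u)) = P b := by
            intro a
            exact Finset.prod_congr rfl fun u hu => by rw [hprod a a₀ b u hu]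
          rw [Finset.sum_congr rfl fun a _ => this a, Finset.sum_const,
            Finset.card_univ, nsmul_eq_mul]
          have hcardpi : Fintype.card ({ i // p i } → Bool) = 2 ^ f := by
            simp [hp, hf]
          rw [hcardpi]
          push_cast
          ring
        rw [← this]
        exact IH
      -- finish
      rw [hcard]
      have hpow : (2 : ℝ) ^ (n - A.card) = 2 ^ f * 2 ^ (n - (A.card + f)) := by
        rw [← pow_add]
        congr 1
        omega
      rw [hpow] at hIH2
      have h2f : (0 : ℝ) < 2 ^ f := by positivity
      calc ∑ x : Fin n → Bool, ∏ u ∈ insert w U, μ (restrict x (S u) (hS u))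
          ≤ ∑ b, P b := hsum
        _ ≤ 2 ^ (n - (A.card + f)) := le_of_mul_le_mul_left hIH2 h2f

/-- Lemma `gen-q-lem`: for any distribution `μ` on `{0,1}^m` and any multiset
`S = (S_u : u ∈ {0,1}^k)` of `m`-element subsets of `[1,n]` with `q(S) = m·2^k - |⋃S|`
conflicts, `E_x[∏_u μ(x|S_u)] ≤ 2^{q(S)} / 2^{m·2^k}`. -/
theorem gen_q_lemma (m n k : ℕ) (hmn : m ≤ n) (hk : 1 ≤ k)
    (μ : (Fin m → Bool) → ℝ)
    (hμ0 : ∀ z, 0 ≤ μ z) (hμ1 : (∑ z : Fin m → Bool, μ z) = 1)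
    (S : (Fin k → Bool) → Finset (Fin n)) (hS : ∀ u, (S u).card = m) :
    (∑ x : Fin n → Bool, ∏ u : Fin k → Bool, μ (restrict x (S u) (hS u))) / 2 ^ n
      ≤ (2 : ℝ) ^ (m * 2 ^ k - (Finset.univ.biUnion S).card : ℕ) / 2 ^ (m * 2 ^ k) := by
  classical
  set t := (Finset.univ.biUnion S).card with ht
  have htn : t ≤ n := by simpa [ht] using Finset.card_le_univ (Finset.univ.biUnion S)
  have htm : t ≤ m * 2 ^ k := by
    calc t ≤ ∑ u : Fin k → Bool, (S u).card := Finset.card_biUnion_le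
      _ = m * 2 ^ k := by simp [hS, Finset.sum_const, mul_comm]
  have hkey := key_lemma μ hμ0 hμ1 S hS Finset.univ
  have h1 : (∑ x : Fin n → Bool, ∏ u : Fin k → Bool, μ (restrict x (S u) (hS u))) / 2 ^ n
      ≤ (2 : ℝ) ^ (n - t) / 2 ^ n := by
    apply div_le_div_of_nonneg_right hkey (by positivity) |>.trans_eq rfl
  refine h1.trans_eq ?_
  rw [div_eq_div_iff (by positivity) (by positivity)]
  rw [← pow_add, ← pow_add]
  congr 1
  omega
end

section
/- Let m ≤ n, k ≥ 1, let f, g : {0,1}^m → ℝ, let μ be a distribution on {0,1}^m, and let φ be any masking function from ({0,1}^n)^k to m-element subsets of {1,…,n}. Define λ(x, y_1,…,y_k) = μ(x|φ(y_1,…,y_k)) / 2^{(k+1)n−m}. Then λ is a distribution on {0,1}^n × ({0,1}^n)^k, and corr_λ(Lift(g,φ), Lift(f,φ)) = corr_μ(g, f). -/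
lemma sum_restrict {n m : ℕ} (S : Finset (Fin n)) (h : S.card = m)
    (F : (Fin m → Bool) → ℝ) :
    ∑ x : Fin n → Bool, F (restrict x S h) = 2 ^ (n - m) * ∑ z : Fin m → Bool, F z := by
  classical
  let e0 : Fin m ≃ {i : Fin n // i ∈ S} := (S.orderIsoOfFin h).toEquiv
  let E : (Fin n → Bool) ≃ ((Fin m → Bool) × ({i : Fin n // i ∉ S} → Bool)) :=
    ((Equiv.sumCompl (· ∈ S)).symm.arrowCongr (Equiv.refl Bool)).trans
      ((Equiv.sumArrowEquivProdArrow _ _ Bool).trans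
        (Equiv.prodCongr (e0.symm.arrowCongr (Equiv.refl Bool)) (Equiv.refl _)))
  have hE : ∀ x, (E x).1 = restrict x S h := by
    intro x; funext i; rfl
  have := Fintype.sum_equiv E (fun x => F (restrict x S h)) (fun p => F p.1)
    (fun x => by show F (restrict x S h) = F (E x).1; rw [hE])
  rw [this, Fintype.sum_prod_type]
  simp only [Finset.sum_const, Finset.card_univ, nsmul_eq_mul]
  rw [Finset.mul_sum]
  congr 1
  ext a
  rw [Fintype.card_fun, Fintype.card_bool, Fintype.card_subtype_compl, Fintype.card_coe,
    Fintype.card_fin, h]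
  push_cast
  ring

lemma double_sum_restrict {m n k : ℕ}
    (φ : (Fin k → (Fin n → Bool)) → Finset (Fin n)) (hφ : ∀ y, (φ y).card = m)
    (G : (Fin m → Bool) → ℝ) :
    (∑ x : Fin n → Bool, ∑ y : Fin k → (Fin n → Bool), G (restrict x (φ y) (hφ y)))
      = ((2 : ℝ) ^ n) ^ k * (2 ^ (n - m) * ∑ z : Fin m → Bool, G z) := by
  rw [Finset.sum_comm]
  have : ∀ y : Fin k → (Fin n → Bool),
      ∑ x : Fin n → Bool, G (restrict x (φ y) (hφ y))
        = 2 ^ (n - m) * ∑ z : Fin m → Bool, G z := fun y => sum_restrict (φ y) (hφ y) G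
  simp only [this, Finset.sum_const, Finset.card_univ, nsmul_eq_mul]
  congr 1
  rw [Fintype.card_fun, Fintype.card_fun, Fintype.card_bool, Fintype.card_fin,
    Fintype.card_fin]
  push_cast
  ring

/-- the lifted distribution `λ(x,ȳ) = μ(x|φ(ȳ)) / 2^{(k+1)n-m}` is a
distribution on `{0,1}^n × ({0,1}^n)^k`, and the correlation of the lifted functions
under `λ` equals the correlation of the base functions under `μ`. -/
theorem lifted_distribution_and_correlation (m n k : ℕ) (hmn : m ≤ n) (hk : 1 ≤ k)
    (f g : (Fin m → Bool) → ℝ)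
    (μ : (Fin m → Bool) → ℝ)
    (hμ0 : ∀ z, 0 ≤ μ z) (hμ1 : (∑ z : Fin m → Bool, μ z) = 1)
    (φ : (Fin k → (Fin n → Bool)) → Finset (Fin n)) (hφ : ∀ y, (φ y).card = m) :
    (∀ (x : Fin n → Bool) (y : Fin k → (Fin n → Bool)),
        0 ≤ μ (restrict x (φ y) (hφ y)) / 2 ^ ((k + 1) * n - m)) ∧
    (∑ x : Fin n → Bool, ∑ y : Fin k → (Fin n → Bool),
        μ (restrict x (φ y) (hφ y)) / 2 ^ ((k + 1) * n - m)) = 1 ∧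
    (∑ x : Fin n → Bool, ∑ y : Fin k → (Fin n → Bool),
        (μ (restrict x (φ y) (hφ y)) / 2 ^ ((k + 1) * n - m)) *
          g (restrict x (φ y) (hφ y)) * f (restrict x (φ y) (hφ y)))
      = ∑ z : Fin m → Bool, μ z * g z * f z := by
  have hexp : (k + 1) * n - m = n * k + (n - m) := by
    have h1 : (k + 1) * n = k * n + n := by ring
    have h2 : n * k = k * n := by ring
    omega
  have hC : (2 : ℝ) ^ ((k + 1) * n - m) = ((2 : ℝ) ^ n) ^ k * 2 ^ (n - m) := by
    rw [hexp, pow_add, ← pow_mul]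
  have hCpos : (0 : ℝ) < 2 ^ ((k + 1) * n - m) := by positivity
  refine ⟨fun x y => div_nonneg (hμ0 _) hCpos.le, ?_, ?_⟩
  · rw [double_sum_restrict φ hφ (fun z => μ z / 2 ^ ((k + 1) * n - m))]
    rw [← Finset.sum_div, hμ1, hC]
    field_simp
  · rw [double_sum_restrict φ hφ
      (fun z => (μ z / 2 ^ ((k + 1) * n - m)) * g z * f z)]
    rw [hC]
    rw [Finset.mul_sum, Finset.mul_sum]
    congr 1
    ext z
    have h1 : ((2 : ℝ) ^ n) ^ k * 2 ^ (n - m) ≠ 0 := by positivity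
    field_simp
end

section
/- Let m ≤ n, k ≥ 1, let g : {0,1}^m → {−1,1}, let μ be a distribution on {0,1}^m, let φ be a masking function from ({0,1}^n)^k to m-element subsets of {1,…,n}, and let λ(x,ȳ) = μ(x|φ(ȳ)) / 2^{(k+1)n−m}. Then (disc_λ(Lift(g,φ)))^{2^k} ≤ 2^{m·2^k} · E_{ȳ⁰,ȳ¹}[ | E_x[ ∏_{u∈{0,1}^k} μ(x|φ(y_1^{u_1},…,y_k^{u_k}))·g(x|φ(y_1^{u_1},…,y_k^{u_k})) ] | ], where x is uniform over {0,1}^n and ȳ⁰ = (y_1⁰,…,y_k⁰), ȳ¹ = (y_1¹,…,y_k¹) are independent uniform elements of ({0,1}^n)^k, and disc_λ is the discrepancy with respect to cylinder intersections in the (k+1)-fold product {0,1}^n × ({0,1}^n)^k. -/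
/-- A cylinder intersection in the `(k+1)`-fold product `X × Y^k`: an intersection
`Γ₀ ∩ ⋂ᵢ Γᵢ`, where `Γ₀` does not depend on the `X`-coordinate and `Γᵢ` does not
depend on the `i`-th `Y`-coordinate. -/
def IsCylinderIntersection {k : ℕ} {X Y : Type}
    (Γ : Set (X × (Fin k → Y))) : Prop :=
  ∃ (Γ0 : Set (X × (Fin k → Y))) (ΓY : Fin k → Set (X × (Fin k → Y))),
    (∀ x x' y, (x, y) ∈ Γ0 ↔ (x', y) ∈ Γ0) ∧
    (∀ (i : Fin k) x y y', (∀ j, j ≠ i → y j = y' j) →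
      ((x, y) ∈ ΓY i ↔ (x, y') ∈ ΓY i)) ∧
    Γ = Γ0 ∩ ⋂ i, ΓY i

/-- The discrepancy of `F` under the distribution `lam`: the supremum over cylinder
intersections `Γ` of `|∑_z lam(z)·F(z)·1_Γ(z)|`. -/
noncomputable def disc {k : ℕ} {X Y : Type} [Fintype X] [Fintype Y]
    (lam F : X × (Fin k → Y) → ℝ) : ℝ :=
  sSup {v : ℝ | ∃ Γ : Set (X × (Fin k → Y)), IsCylinderIntersection Γ ∧
    v = |∑ z : X × (Fin k → Y), lam z * F z * Γ.indicator (fun _ => (1 : ℝ)) z|}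

open Finset

lemma pm_helper {ι : Type*} [Fintype ι] (f : ι → ℝ) (hf : ∀ i, 0 ≤ f i) (p : ℕ) (hp : 1 ≤ p) :
    (∑ i, f i) ^ p * (Fintype.card ι : ℝ) ≤ (Fintype.card ι : ℝ) ^ p * ∑ i, f i ^ p := by
  obtain ⟨q, rfl⟩ : ∃ q, p = q + 1 := ⟨p - 1, by omega⟩
  have h := pow_sum_le_card_mul_sum_pow (s := (univ : Finset ι)) (f := f) (fun i _ => hf i) q
  have hc : ((univ : Finset ι).card : ℝ) = (Fintype.card ι : ℝ) := by simp
  calc (∑ i, f i) ^ (q+1) * (Fintype.card ι : ℝ)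
      ≤ ((Fintype.card ι : ℝ) ^ q * ∑ i, f i ^ (q+1)) * (Fintype.card ι : ℝ) := by
        apply mul_le_mul_of_nonneg_right _ (by positivity)
        rw [← hc]; exact h
    _ = (Fintype.card ι : ℝ) ^ (q+1) * ∑ i, f i ^ (q+1) := by ring

lemma bns {X Y : Type} [Fintype X] [Fintype Y] [Nonempty Y] :
    ∀ (k : ℕ) (h : X → (Fin k → Y) → ℝ)
      (χ0 : (Fin k → Y) → ℝ) (χ : Fin k → X → (Fin k → Y) → ℝ),
      (∀ y, |χ0 y| ≤ 1) → (∀ i x y, |χ i x y| ≤ 1) →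
      (∀ (i : Fin k) x y y', (∀ j, j ≠ i → y j = y' j) → χ i x y = χ i x y') →
      |∑ x : X, ∑ y : Fin k → Y, h x y * (χ0 y * ∏ i, χ i x y)| ^ (2^k)
          * (Fintype.card Y : ℝ) ^ (2*k) * (Fintype.card X : ℝ)
        ≤ (Fintype.card X : ℝ) ^ (2^k) * (Fintype.card Y : ℝ) ^ (k * 2^k) *
          ∑ y0 : Fin k → Y, ∑ y1 : Fin k → Y,
            |∑ x : X, ∏ u : Fin k → Bool, h x (fun i => if u i then y1 i else y0 i)| := by
  intro k
  induction k with
  | zero =>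
    intro h χ0 χ hb0 hb hind
    have hde : ∀ (y : Fin 0 → Y) (x : X), h x y = h x default := by
      intro y x; congr 1; exact Subsingleton.elim _ _
    have h1 : (∑ x : X, ∑ y : Fin 0 → Y, h x y * (χ0 y * ∏ i, χ i x y))
        = (∑ x : X, h x default) * χ0 default := by
      rw [Finset.sum_mul]
      refine Finset.sum_congr rfl fun x _ => ?_
      rw [Fintype.sum_unique]
      simp
    have h2 : ∀ y0 y1 : Fin 0 → Y,
        (∑ x : X, ∏ u : Fin 0 → Bool, h x (fun i => if u i then y1 i else y0 i))
        = ∑ x : X, h x default := by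
      intro y0 y1
      refine Finset.sum_congr rfl fun x _ => ?_
      rw [Fintype.prod_unique, hde]
    have e0 : ∀ f : (Fin 0 → Y) → ℝ, ∑ y : Fin 0 → Y, f y = f default :=
      fun f => Fintype.sum_unique f
    clear h1
    simp only [pow_zero, pow_one, Nat.mul_zero, Nat.zero_mul, mul_one, e0, h2,
      Finset.univ_eq_empty, Finset.prod_empty]
    rw [← Finset.sum_mul, abs_mul]
    have hc : |χ0 default| ≤ 1 := hb0 _
    have hN : (0:ℝ) ≤ (Fintype.card X : ℝ) := by positivity
    calc |∑ x : X, h x default| * |χ0 default| * (Fintype.card X : ℝ)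
        ≤ |∑ x : X, h x default| * (Fintype.card X : ℝ) :=
          mul_le_mul_of_nonneg_right (mul_le_of_le_one_right (abs_nonneg _) hc) hN
      _ = (Fintype.card X : ℝ) * |∑ x : X, h x default| := mul_comm _ _
  | succ k IH =>
    intro h χ0 χ hb0 hb hind
    obtain ⟨t₀⟩ := ‹Nonempty Y›
    have hM1 : (1:ℝ) ≤ (Fintype.card Y : ℝ) := by
      exact_mod_cast Fintype.card_pos
    have hsplit : ∀ (f : (Fin (k+1) → Y) → ℝ),
        ∑ y : Fin (k+1) → Y, f y = ∑ t : Y, ∑ y' : Fin k → Y, f (Fin.cons t y') := by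
      intro f
      rw [← Equiv.sum_comp (Fin.consEquiv fun _ => Y) f, Fintype.sum_prod_type]
      rfl
    have hsplitB : ∀ (f : (Fin (k+1) → Bool) → ℝ),
        ∏ u : Fin (k+1) → Bool, f u = ∏ b : Bool, ∏ u' : Fin k → Bool, f (Fin.cons b u') := by
      intro f
      rw [← Equiv.prod_comp (Fin.consEquiv fun _ => Bool) f, Fintype.prod_prod_type]
      rfl
    have swap4 : ∀ (F : X → (Fin k → Y) → Y → Y → ℝ),
        ∑ x : X, ∑ y' : Fin k → Y, ∑ t0 : Y, ∑ t1 : Y, F x y' t0 t1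
        = ∑ t0 : Y, ∑ t1 : Y, ∑ x : X, ∑ y' : Fin k → Y, F x y' t0 t1 := by
      intro F
      calc ∑ x : X, ∑ y' : Fin k → Y, ∑ t0 : Y, ∑ t1 : Y, F x y' t0 t1
          = ∑ x : X, ∑ t0 : Y, ∑ y' : Fin k → Y, ∑ t1 : Y, F x y' t0 t1 :=
            Finset.sum_congr rfl fun x _ => Finset.sum_comm
        _ = ∑ x : X, ∑ t0 : Y, ∑ t1 : Y, ∑ y' : Fin k → Y, F x y' t0 t1 :=
            Finset.sum_congr rfl fun x _ => Finset.sum_congr rfl fun t0 _ => Finset.sum_comm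
        _ = ∑ t0 : Y, ∑ x : X, ∑ t1 : Y, ∑ y' : Fin k → Y, F x y' t0 t1 := Finset.sum_comm
        _ = ∑ t0 : Y, ∑ t1 : Y, ∑ x : X, ∑ y' : Fin k → Y, F x y' t0 t1 :=
            Finset.sum_congr rfl fun t0 _ => Finset.sum_comm
    set A : X → (Fin k → Y) → ℝ := fun x y' => χ 0 x (Fin.cons t₀ y') with hAdef
    set B : X → (Fin k → Y) → ℝ := fun x y' =>
      ∑ t : Y, h x (Fin.cons t y') *
        (χ0 (Fin.cons t y') * ∏ i : Fin k, χ i.succ x (Fin.cons t y')) with hBdef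
    have hA : ∀ x y' t, χ 0 x (Fin.cons t y') = A x y' := by
      intro x y' t
      apply hind 0 x
      intro j hj
      obtain ⟨j', rfl⟩ := Fin.eq_succ_of_ne_zero hj
      simp [Fin.cons_succ]
    have hS : (∑ x : X, ∑ y : Fin (k+1) → Y, h x y * (χ0 y * ∏ i, χ i x y))
        = ∑ x : X, ∑ y' : Fin k → Y, A x y' * B x y' := by
      refine Finset.sum_congr rfl fun x _ => ?_
      rw [hsplit, Finset.sum_comm]
      refine Finset.sum_congr rfl fun y' _ => ?_
      rw [hBdef, Finset.mul_sum]
      refine Finset.sum_congr rfl fun t _ => ?_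
      rw [Fin.prod_univ_succ, hA x y' t]
      ring
    set T : Y → Y → ℝ := fun t0 t1 => ∑ x : X, ∑ y' : Fin k → Y,
        (h x (Fin.cons t0 y') * h x (Fin.cons t1 y')) *
        ((χ0 (Fin.cons t0 y') * χ0 (Fin.cons t1 y')) *
          ∏ i : Fin k, (χ i.succ x (Fin.cons t0 y') * χ i.succ x (Fin.cons t1 y'))) with hTdef
    have hBB : (∑ x : X, ∑ y' : Fin k → Y, (B x y')^2) = ∑ t0 : Y, ∑ t1 : Y, T t0 t1 := by
      have e1 : ∀ x y', (B x y')^2 = ∑ t0 : Y, ∑ t1 : Y,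
          (h x (Fin.cons t0 y') * h x (Fin.cons t1 y')) *
          ((χ0 (Fin.cons t0 y') * χ0 (Fin.cons t1 y')) *
            ∏ i : Fin k, (χ i.succ x (Fin.cons t0 y') * χ i.succ x (Fin.cons t1 y'))) := by
        intro x y'
        rw [hBdef]
        rw [pow_two, Finset.sum_mul_sum]
        refine Finset.sum_congr rfl fun t0 _ => Finset.sum_congr rfl fun t1 _ => ?_
        rw [Finset.prod_mul_distrib]
        ring
      simp only [e1]
      rw [hTdef]
      exact swap4 _
    have hCS : (∑ x : X, ∑ y' : Fin k → Y, A x y' * B x y')^2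
        ≤ ((Fintype.card X : ℝ) * (Fintype.card Y : ℝ)^k) *
          ∑ x : X, ∑ y' : Fin k → Y, (B x y')^2 := by
      rw [← Fintype.sum_prod_type (fun p : X × (Fin k → Y) => A p.1 p.2 * B p.1 p.2),
        ← Fintype.sum_prod_type (fun p : X × (Fin k → Y) => (B p.1 p.2)^2)]
      refine (Finset.sum_mul_sq_le_sq_mul_sq univ _ _).trans ?_
      apply mul_le_mul_of_nonneg_right _ ?_
      · calc ∑ p : X × (Fin k → Y), (A p.1 p.2)^2
            ≤ ∑ _p : X × (Fin k → Y), (1:ℝ) := by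
              refine Finset.sum_le_sum fun p _ => ?_
              rw [sq_le_one_iff_abs_le_one]
              exact hb 0 p.1 (Fin.cons t₀ p.2)
          _ = (Fintype.card X : ℝ) * (Fintype.card Y : ℝ)^k := by
              simp [Fintype.card_prod, Fintype.card_fun]
      · positivity
    have hIH : ∀ t0 t1 : Y, |T t0 t1| ^ (2^k) * (Fintype.card Y : ℝ)^(2*k) * (Fintype.card X : ℝ)
        ≤ (Fintype.card X : ℝ)^(2^k) * (Fintype.card Y : ℝ)^(k*2^k) *
          ∑ y0 : Fin k → Y, ∑ y1 : Fin k → Y,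
            |∑ x : X, ∏ u : Fin k → Bool,
              (h x (Fin.cons t0 (fun i => if u i then y1 i else y0 i)) *
               h x (Fin.cons t1 (fun i => if u i then y1 i else y0 i)))| := by
      intro t0 t1
      rw [hTdef]
      refine IH (fun x y' => h x (Fin.cons t0 y') * h x (Fin.cons t1 y'))
        (fun y' => χ0 (Fin.cons t0 y') * χ0 (Fin.cons t1 y'))
        (fun i x y' => χ i.succ x (Fin.cons t0 y') * χ i.succ x (Fin.cons t1 y'))
        (fun y' => by
          rw [abs_mul]
          exact mul_le_one₀ (hb0 _) (abs_nonneg _) (hb0 _))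
        (fun i x y' => by
          rw [abs_mul]
          exact mul_le_one₀ (hb _ _ _) (abs_nonneg _) (hb _ _ _))
        (fun i x y y' hag => ?_)
      have key : ∀ t : Y, ∀ j : Fin (k+1), j ≠ i.succ →
          (Fin.cons t y : Fin (k+1) → Y) j = (Fin.cons t y' : Fin (k+1) → Y) j := by
        intro t j
        refine Fin.cases (fun _ => by simp) (fun j' hj => ?_) j
        simp only [Fin.cons_succ]
        exact hag j' (fun h' => hj (by rw [h']))
      rw [hind i.succ x _ _ (key t0), hind i.succ x _ _ (key t1)]
    have hsel : ∀ (b : Bool) (u' : Fin k → Bool) (t0 t1 : Y) (y0' y1' : Fin k → Y),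
        (fun i => if (Fin.cons b u' : Fin (k+1) → Bool) i
            then (Fin.cons t1 y1' : Fin (k+1) → Y) i else (Fin.cons t0 y0' : Fin (k+1) → Y) i)
        = Fin.cons (if b then t1 else t0) (fun i => if u' i then y1' i else y0' i) := by
      intro b u' t0 t1 y0' y1'
      funext i
      refine Fin.cases ?_ ?_ i
      · simp
      · intro j; simp [Fin.cons_succ]
    have htarget : (∑ y0 : Fin (k+1) → Y, ∑ y1 : Fin (k+1) → Y,
          |∑ x : X, ∏ u : Fin (k+1) → Bool, h x (fun i => if u i then y1 i else y0 i)|)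
        = ∑ t0 : Y, ∑ t1 : Y, ∑ y0' : Fin k → Y, ∑ y1' : Fin k → Y,
          |∑ x : X, ∏ u' : Fin k → Bool,
            (h x (Fin.cons t0 (fun i => if u' i then y1' i else y0' i)) *
             h x (Fin.cons t1 (fun i => if u' i then y1' i else y0' i)))| := by
      simp only [hsplit]
      refine Finset.sum_congr rfl fun t0 _ => ?_
      rw [Finset.sum_comm]
      refine Finset.sum_congr rfl fun t1 _ => Finset.sum_congr rfl fun y0' _ =>
        Finset.sum_congr rfl fun y1' _ => ?_
      congr 1
      refine Finset.sum_congr rfl fun x _ => ?_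
      rw [hsplitB, Fintype.prod_bool, ← Finset.prod_mul_distrib]
      refine Finset.prod_congr rfl fun u' _ => ?_
      rw [hsel, hsel]
      norm_num
      ring
    rw [hS, htarget]
    have hPM : (∑ t0 : Y, ∑ t1 : Y, |T t0 t1|) ^ (2^k) * (Fintype.card Y : ℝ)^2
        ≤ ((Fintype.card Y : ℝ)^2) ^ (2^k) * ∑ t0 : Y, ∑ t1 : Y, |T t0 t1| ^ (2^k) := by
      have hpm := pm_helper (fun p : Y × Y => |T p.1 p.2|) (fun p => abs_nonneg _) (2^k)
        Nat.one_le_two_pow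
      simp only [Fintype.sum_prod_type] at hpm
      have hcard : ((Fintype.card (Y × Y) : ℕ) : ℝ) = (Fintype.card Y : ℝ)^2 := by
        push_cast [Fintype.card_prod]; ring
      rw [hcard] at hpm
      exact hpm
    have h3 : |∑ x : X, ∑ y' : Fin k → Y, A x y' * B x y'|^2
        ≤ ((Fintype.card X : ℝ) * (Fintype.card Y : ℝ)^k) * ∑ t0 : Y, ∑ t1 : Y, |T t0 t1| := by
      rw [sq_abs]
      refine hCS.trans ?_
      rw [hBB]
      refine mul_le_mul_of_nonneg_left ?_ (by positivity)
      exact Finset.sum_le_sum fun t0 _ => Finset.sum_le_sum fun t1 _ => le_abs_self _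
    calc |∑ x : X, ∑ y' : Fin k → Y, A x y' * B x y'| ^ (2^(k+1))
          * (Fintype.card Y : ℝ) ^ (2*(k+1)) * (Fintype.card X : ℝ)
        = (|∑ x : X, ∑ y' : Fin k → Y, A x y' * B x y'|^2)^(2^k)
            * ((Fintype.card Y : ℝ)^(2*k) * (Fintype.card X : ℝ)) * (Fintype.card Y : ℝ)^2 := by
          ring
      _ ≤ (((Fintype.card X : ℝ) * (Fintype.card Y : ℝ)^k) * (∑ t0 : Y, ∑ t1 : Y, |T t0 t1|))^(2^k)
            * ((Fintype.card Y : ℝ)^(2*k) * (Fintype.card X : ℝ)) * (Fintype.card Y : ℝ)^2 := by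
          refine mul_le_mul_of_nonneg_right (mul_le_mul_of_nonneg_right ?_ (by positivity)) (by positivity)
          exact pow_le_pow_left₀ (sq_nonneg _) h3 _
      _ = ((Fintype.card X : ℝ) * (Fintype.card Y : ℝ)^k)^(2^k)
            * ((Fintype.card Y : ℝ)^(2*k) * (Fintype.card X : ℝ))
            * ((∑ t0 : Y, ∑ t1 : Y, |T t0 t1|)^(2^k) * (Fintype.card Y : ℝ)^2) := by
          ring
      _ ≤ ((Fintype.card X : ℝ) * (Fintype.card Y : ℝ)^k)^(2^k)
            * ((Fintype.card Y : ℝ)^(2*k) * (Fintype.card X : ℝ))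
            * (((Fintype.card Y : ℝ)^2) ^ (2^k) * ∑ t0 : Y, ∑ t1 : Y, |T t0 t1| ^ (2^k)) := by
          refine mul_le_mul_of_nonneg_left hPM (by positivity)
      _ = ((Fintype.card X : ℝ) * (Fintype.card Y : ℝ)^k)^(2^k) * ((Fintype.card Y : ℝ)^2) ^ (2^k)
            * ∑ t0 : Y, ∑ t1 : Y, (|T t0 t1| ^ (2^k) * (Fintype.card Y : ℝ)^(2*k) * (Fintype.card X : ℝ)) := by
          simp only [Finset.mul_sum, Finset.sum_mul]
          refine Finset.sum_congr rfl fun t0 _ => Finset.sum_congr rfl fun t1 _ => by ring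
      _ ≤ ((Fintype.card X : ℝ) * (Fintype.card Y : ℝ)^k)^(2^k) * ((Fintype.card Y : ℝ)^2) ^ (2^k)
            * ∑ t0 : Y, ∑ t1 : Y, ((Fintype.card X : ℝ)^(2^k) * (Fintype.card Y : ℝ)^(k*2^k) *
              ∑ y0 : Fin k → Y, ∑ y1 : Fin k → Y,
                |∑ x : X, ∏ u : Fin k → Bool,
                  (h x (Fin.cons t0 (fun i => if u i then y1 i else y0 i)) *
                   h x (Fin.cons t1 (fun i => if u i then y1 i else y0 i)))|) := by
          refine mul_le_mul_of_nonneg_left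
            (Finset.sum_le_sum fun t0 _ => Finset.sum_le_sum fun t1 _ => hIH t0 t1) (by positivity)
      _ = (Fintype.card X : ℝ)^(2^(k+1)) * (Fintype.card Y : ℝ)^((k+1)*2^(k+1))
            * ∑ t0 : Y, ∑ t1 : Y, ∑ y0' : Fin k → Y, ∑ y1' : Fin k → Y,
              |∑ x : X, ∏ u' : Fin k → Bool,
                (h x (Fin.cons t0 (fun i => if u' i then y1' i else y0' i)) *
                 h x (Fin.cons t1 (fun i => if u' i then y1' i else y0' i)))| := by
          simp only [Finset.mul_sum]
          refine Finset.sum_congr rfl fun t0 _ => Finset.sum_congr rfl fun t1 _ =>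
            Finset.sum_congr rfl fun y0' _ => Finset.sum_congr rfl fun y1' _ => by ring

lemma sSup_pow_le_aux {S : Set ℝ} {R : ℝ} (p : ℕ) (hp : p ≠ 0) (hR : 0 ≤ R) (h0 : (0:ℝ) ∈ S)
    (hle : ∀ v ∈ S, 0 ≤ v ∧ v ^ p ≤ R) : (sSup S) ^ p ≤ R := by
  have hub : ∀ v ∈ S, v ≤ R ^ ((p : ℝ))⁻¹ := by
    intro v hv
    obtain ⟨h0v, hvp⟩ := hle v hv
    calc v = (v ^ p) ^ ((p:ℝ))⁻¹ := (Real.pow_rpow_inv_natCast h0v hp).symm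
      _ ≤ R ^ ((p:ℝ))⁻¹ := Real.rpow_le_rpow (by positivity) hvp (by positivity)
  have hsle : sSup S ≤ R ^ ((p:ℝ))⁻¹ := Real.sSup_le hub (Real.rpow_nonneg hR _)
  have h0s : 0 ≤ sSup S := le_csSup ⟨R ^ ((p:ℝ))⁻¹, fun v hv => hub v hv⟩ h0
  calc (sSup S)^p ≤ (R ^ ((p:ℝ))⁻¹)^p := pow_le_pow_left₀ h0s hsle p
    _ = R := Real.rpow_inv_natCast_pow hR hp

/-- with `λ(x,ȳ) = μ(x|φ(ȳ)) / 2^{(k+1)n-m}`,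
`disc_λ(Lift(g,φ))^{2^k} ≤ 2^{m·2^k} · E_{ȳ⁰,ȳ¹}[|E_x[∏_u μ(x|φ(ȳ^u))·g(x|φ(ȳ^u))]|]`. -/
theorem disc_bound_by_bns (m n k : ℕ) (hmn : m ≤ n) (hk : 1 ≤ k)
    (g : (Fin m → Bool) → ℝ) (hg : ∀ z, g z = 1 ∨ g z = -1)
    (μ : (Fin m → Bool) → ℝ)
    (hμ0 : ∀ z, 0 ≤ μ z) (hμ1 : (∑ z : Fin m → Bool, μ z) = 1)
    (φ : (Fin k → (Fin n → Bool)) → Finset (Fin n)) (hφ : ∀ y, (φ y).card = m) :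
    (disc (fun z => μ (restrict z.1 (φ z.2) (hφ z.2)) / 2 ^ ((k + 1) * n - m))
        (fun z => g (restrict z.1 (φ z.2) (hφ z.2)))) ^ (2 ^ k)
      ≤ 2 ^ (m * 2 ^ k) *
        ((∑ y0 : Fin k → (Fin n → Bool), ∑ y1 : Fin k → (Fin n → Bool),
            |(∑ x : Fin n → Bool, ∏ u : Fin k → Bool,
                μ (restrict x (φ (fun i => if u i then y1 i else y0 i))
                    (hφ (fun i => if u i then y1 i else y0 i))) *
                  g (restrict x (φ (fun i => if u i then y1 i else y0 i))
                    (hφ (fun i => if u i then y1 i else y0 i)))) / 2 ^ n|) /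
          ((2 ^ (k * n) : ℝ)) ^ 2) := by
  classical
  have hmkn : m ≤ (k + 1) * n := hmn.trans (Nat.le_mul_of_pos_left n (Nat.succ_pos k))
  unfold disc
  refine sSup_pow_le_aux (2^k) (by positivity) (by positivity) ?_ ?_
  · exact ⟨∅, ⟨∅, fun _ => Set.univ, by simp, by simp, by simp⟩, by simp⟩
  · rintro v ⟨Γ, ⟨Γ0, ΓY, h0, hY, rfl⟩, rfl⟩
    refine ⟨abs_nonneg _, ?_⟩
    set x₀ : Fin n → Bool := fun _ => false with hx₀
    -- bound hypotheses for the indicator "cylinder" functions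
    have hb0 : ∀ y : Fin k → Fin n → Bool, |Γ0.indicator (fun _ => (1:ℝ)) (x₀, y)| ≤ 1 := by
      intro y; by_cases hy : (x₀, y) ∈ Γ0
      · rw [Set.indicator_of_mem hy]; norm_num
      · rw [Set.indicator_of_notMem hy]; norm_num
    have hbb : ∀ (i : Fin k) (x : Fin n → Bool) (y : Fin k → Fin n → Bool),
        |(ΓY i).indicator (fun _ => (1:ℝ)) (x, y)| ≤ 1 := by
      intro i x y; by_cases hy : (x, y) ∈ ΓY i
      · rw [Set.indicator_of_mem hy]; norm_num
      · rw [Set.indicator_of_notMem hy]; norm_num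
    have hindep : ∀ (i : Fin k) (x : Fin n → Bool) (y y' : Fin k → Fin n → Bool),
        (∀ j, j ≠ i → y j = y' j) →
        (ΓY i).indicator (fun _ => (1:ℝ)) (x, y) = (ΓY i).indicator (fun _ => (1:ℝ)) (x, y') := by
      intro i x y y' hag
      have hiff := hY i x y y' hag
      by_cases hxy : (x, y) ∈ ΓY i
      · rw [Set.indicator_of_mem hxy, Set.indicator_of_mem (hiff.mp hxy)]
      · rw [Set.indicator_of_notMem hxy, Set.indicator_of_notMem (fun hc => hxy (hiff.mpr hc))]
    -- indicator of the intersection factors as a product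
    have hid : ∀ z : (Fin n → Bool) × (Fin k → Fin n → Bool),
        (Γ0 ∩ ⋂ i, ΓY i).indicator (fun _ => (1:ℝ)) z
        = Γ0.indicator (fun _ => (1:ℝ)) (x₀, z.2) *
            ∏ i, (ΓY i).indicator (fun _ => (1:ℝ)) (z.1, z.2) := by
      rintro ⟨zx, zy⟩
      by_cases hz : (zx, zy) ∈ Γ0 ∩ ⋂ i, ΓY i
      · obtain ⟨hz0, hzY⟩ := hz
        rw [Set.mem_iInter] at hzY
        have hmem : (zx, zy) ∈ Γ0 ∩ ⋂ i, ΓY i := ⟨hz0, Set.mem_iInter.mpr hzY⟩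
        have e1 : (Γ0 ∩ ⋂ i, ΓY i).indicator (fun _ => (1:ℝ)) (zx, zy) = 1 :=
          Set.indicator_of_mem hmem _
        have e2 : Γ0.indicator (fun _ => (1:ℝ)) (x₀, zy) = 1 :=
          Set.indicator_of_mem ((h0 zx x₀ zy).mp hz0) _
        have e3 : ∀ i : Fin k, (ΓY i).indicator (fun _ => (1:ℝ)) (zx, zy) = 1 :=
          fun i => Set.indicator_of_mem (hzY i) _
        rw [e1, e2, Finset.prod_congr rfl (fun i _ => e3 i), Finset.prod_const_one, mul_one]
      · rw [Set.indicator_of_notMem hz]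
        by_cases hz0 : (zx, zy) ∈ Γ0
        · have hex : ∃ i, (zx, zy) ∉ ΓY i := by
            by_contra hcon; push_neg at hcon
            exact hz ⟨hz0, Set.mem_iInter.mpr hcon⟩
          obtain ⟨i, hi⟩ := hex
          rw [Finset.prod_eq_zero (Finset.mem_univ i) (Set.indicator_of_notMem hi _), mul_zero]
        · rw [Set.indicator_of_notMem (fun hc => hz0 ((h0 x₀ zx zy).mp hc)), zero_mul]
    -- main BNS inequality
    have hcX : ((Fintype.card (Fin n → Bool) : ℕ) : ℝ) = 2 ^ n := by
      simp [Fintype.card_fun]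
    have hb := bns k
      (fun x y => μ (restrict x (φ y) (hφ y)) * g (restrict x (φ y) (hφ y)))
      (fun y => Γ0.indicator (fun _ => (1:ℝ)) (x₀, y))
      (fun i x y => (ΓY i).indicator (fun _ => (1:ℝ)) (x, y))
      hb0 hbb hindep
    beta_reduce at hb
    rw [hcX] at hb
    -- rewrite the sum over the product type
    have hsum : (∑ z : (Fin n → Bool) × (Fin k → Fin n → Bool),
          μ (restrict z.1 (φ z.2) (hφ z.2)) / 2 ^ ((k + 1) * n - m) *
            g (restrict z.1 (φ z.2) (hφ z.2)) *
            (Γ0 ∩ ⋂ i, ΓY i).indicator (fun _ => (1:ℝ)) z)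
        = (∑ x : Fin n → Bool, ∑ y : Fin k → Fin n → Bool,
            μ (restrict x (φ y) (hφ y)) * g (restrict x (φ y) (hφ y)) *
              (Γ0.indicator (fun _ => (1:ℝ)) (x₀, y) *
                ∏ i, (ΓY i).indicator (fun _ => (1:ℝ)) (x, y)))
          / 2 ^ ((k + 1) * n - m) := by
      rw [Fintype.sum_prod_type, Finset.sum_div]
      refine Finset.sum_congr rfl fun x _ => ?_
      rw [Finset.sum_div]
      refine Finset.sum_congr rfl fun y _ => ?_
      rw [hid (x, y)]
      ring
    beta_reduce
    rw [hsum, abs_div, abs_of_pos (show (0:ℝ) < 2 ^ ((k+1)*n - m) by positivity), div_pow]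
    -- clean up the RHS
    simp only [abs_div, abs_of_pos (show (0:ℝ) < (2:ℝ)^n by positivity), ← Finset.sum_div]
    rw [div_le_iff₀ (show (0:ℝ) < ((2:ℝ) ^ ((k+1)*n - m)) ^ (2^k) by positivity)]
    rw [mul_assoc] at hb
    have hb' := (le_div_iff₀
      (show (0:ℝ) < ((2:ℝ)^n) ^ (2*k) * 2^n by positivity)).mpr hb
    refine le_trans hb' (le_of_eq ?_)
    · have hD : (2:ℝ) ^ ((k+1)*n - m) = 2 ^ ((k+1)*n) * (2 ^ m)⁻¹ :=
        pow_sub₀ 2 two_ne_zero hmkn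
      rw [hD]
      have h2 : (2:ℝ) ≠ 0 := two_ne_zero
      field_simp
      ring_nf
      rw [inv_pow]
      field_simp
end
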